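/- arXiv:1405.0065 — 2 statements merged into one kernel-verified Lean document; each statement's English description precedes it below -/
import Mathlib

section
/- Let k ≥ 2 and let r = r_{k-1}(K_k^{(k-1)}; k colors) be the k-color Ramsey number for (k−1)-uniform cliques on k vertices. Let f be any k-coloring of the (k−1)-subsets of a vertex set V with colors {0,...,k−1}, and define a k-graph A on V by making a k-set E an edge iff the sum of f over the (k−1)-subsets of E is not ≡ 0 mod k. Then A contains no copy of K_r^{(k)}. -/
open Finset

theorem Finset.card_powersetCard_card_sub_one {α : Type*} {s : Finset α} (hs : s.Nonempty) :
    #(s.powersetCard (#s - 1)) = #s := by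
  rw [card_powersetCard, Nat.choose_symm hs.card_pos, Nat.choose_one_right]

theorem Finset.sum_powersetCard_sub_one_eq_zero_of_forall_eq {α : Type*} {k : ℕ}
    {s : Finset α} (hs : #s = k) (hk : 1 ≤ k) {g : Finset α → ZMod k} {c : ZMod k}
    (hg : ∀ t ⊆ s, #t = k - 1 → g t = c) :
    ∑ t ∈ s.powersetCard (k - 1), g t = 0 := by
  subst hs
  have hconst : ∀ t ∈ s.powersetCard (#s - 1), g t = c := fun t ht =>
    hg t (mem_powersetCard.1 ht).1 (mem_powersetCard.1 ht).2
  rw [sum_congr rfl hconst, sum_const, card_powersetCard_card_sub_one (card_pos.1 hk),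
    nsmul_eq_mul, ZMod.natCast_self, zero_mul]

theorem stmt7_general {V : Type*} (k r : ℕ) (hk : 2 ≤ k)
    (hr : ∀ S : Finset V, S.card = r → ∀ g : Finset V → ZMod k,
      ∃ Y ⊆ S, Y.card = k ∧ ∃ c : ZMod k, ∀ T ⊆ Y, T.card = k - 1 → g T = c)
    (f : Finset V → ZMod k) :
    ¬ ∃ X : Finset V, X.card = r ∧
      ∀ E ⊆ X, E.card = k → (∑ T ∈ E.powersetCard (k - 1), f T) ≠ 0 := by
  rintro ⟨X, hX, hedge⟩
  obtain ⟨Y, hYX, hYk, c, hc⟩ := hr X hX f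
  exact hedge Y hYX hYk (sum_powersetCard_sub_one_eq_zero_of_forall_eq hYk (by omega) hc)

/-- Suppose `r` has the `k`-color Ramsey property for `(k−1)`-uniform cliques on `k`
vertices: every `k`-coloring of the `(k−1)`-subsets of an `r`-set admits a `k`-set all of
whose `(k−1)`-subsets get the same color.  Let `f` be a `(ℤ/kℤ)`-coloring of the
`(k−1)`-subsets of `V` and let a `k`-set `E` be an edge iff the color sum over its
`(k−1)`-subsets is nonzero mod `k`.  Then the resulting `k`-graph has no copy of
`K_r^{(k)}`. -/
theorem stmt7 {V : Type*} [DecidableEq V] (k r : ℕ) (hk : 2 ≤ k)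
    (hr : ∀ S : Finset V, S.card = r → ∀ g : Finset V → ZMod k,
      ∃ Y ⊆ S, Y.card = k ∧ ∃ c : ZMod k, ∀ T ⊆ Y, T.card = k - 1 → g T = c)
    (f : Finset V → ZMod k) :
    ¬ ∃ X : Finset V, X.card = r ∧
      ∀ E ⊆ X, E.card = k → (∑ T ∈ E.powersetCard (k - 1), f T) ≠ 0 :=
  stmt7_general k r hk hr f
end

section
/- With the random k-graph A_n^{(k)} as above, for each fixed vertex x the distribution of the link L(x) (as a (k−1)-graph on V ∖ {x}) is exactly that of the binomial random (k−1)-graph G^{(k−1)}(n−1, (k−1)/k): distinct (k−1)-sets S ⊆ V∖{x} are edges of L(x) independently, each with probability (k−1)/k. -/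
open Finset

/-!
Write the sum over the `(k-1)`-subsets of `S ∪ {x}` as `f S + c S f`, where `c S f` only reads
the colours of sets containing `x`. No member of `𝒮` contains `x`, so the shear
`f ↦ (S ↦ f S + c S f on 𝒮)` is a bijection of colourings taking the link event to the event
`∀ S ∈ 𝒮, f S ≠ 0`, whose probability is visibly `((k-1)/k)^|𝒮|`.
-/

section Coordinatewise

variable {ι G : Type*} [Fintype ι] [DecidableEq ι] [Fintype G]

lemma card_filter_forall_mem (s : Finset ι) (p : G → Prop) [DecidablePred p] :
    #{f : ι → G | ∀ i ∈ s, p (f i)} =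
      #{a : G | p a} ^ #s * Fintype.card G ^ (Fintype.card ι - #s) := by
  have hpi : ({f : ι → G | ∀ i ∈ s, p (f i)} : Finset _) =
      Fintype.piFinset fun i => if i ∈ s then ({a : G | p a} : Finset G) else univ := by
    ext f
    simp only [mem_filter, mem_univ, true_and, Fintype.mem_piFinset]
    refine ⟨fun h i => ?_, fun h i hi => by simpa [hi] using h i⟩
    split_ifs with hi <;> simp [h i, hi]
  rw [hpi, Fintype.card_piFinset]
  simp only [apply_ite card]
  rw [prod_ite, prod_const, prod_const, filter_mem_eq_inter, univ_inter, filter_not,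
    filter_mem_eq_inter, univ_inter, card_univ_sdiff, card_univ]

lemma card_filter_forall_add_eq_of_dependsOn [AddGroup G] (s : Finset ι) (p : G → Prop)
    [DecidablePred p] (c : ι → (ι → G) → G) (hc : ∀ i ∈ s, DependsOn (c i) (↑s)ᶜ) :
    #{f : ι → G | ∀ i ∈ s, p (f i + c i f)} = #{f : ι → G | ∀ i ∈ s, p (f i)} := by
  set φ : (ι → G) → ι → G := fun f i => if i ∈ s then f i + c i f else f i
  set ψ : (ι → G) → ι → G := fun g i => if i ∈ s then g i - c i g else g i
  have hφ : ∀ f, ∀ i ∈ s, c i (φ f) = c i f := fun f i hi =>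
    hc i hi fun j hj => if_neg hj
  have hψ : ∀ g, ∀ i ∈ s, c i (ψ g) = c i g := fun g i hi =>
    hc i hi fun j hj => if_neg hj
  refine card_nbij' φ ψ ?_ ?_ ?_ ?_
  · intro f hf
    simp only [coe_filter, mem_univ, true_and, Set.mem_ofPred_eq] at hf ⊢
    intro i hi
    simpa only [φ, if_pos hi] using hf i hi
  · intro g hg
    simp only [coe_filter, mem_univ, true_and, Set.mem_ofPred_eq] at hg ⊢
    intro i hi
    simpa only [hψ g i hi, ψ, if_pos hi, sub_add_cancel] using hg i hi
  · intro f _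
    funext i
    by_cases hi : i ∈ s <;> simp [φ, ψ, hi, hφ]
  · intro g _
    funext i
    by_cases hi : i ∈ s <;> simp [φ, ψ, hi, hψ]

end Coordinatewise

lemma sum_powersetCard_insert_of_card_eq {V M : Type*} [DecidableEq V] [AddCommMonoid M]
    {x : V} {S : Finset V} {n : ℕ} (hx : x ∉ S) (hS : #S = n + 1) (f : Finset V → M) :
    ∑ T ∈ (insert x S).powersetCard (n + 1), f T =
      f S + ∑ T ∈ S.powersetCard n, f (insert x T) := by
  have hdisj : Disjoint (S.powersetCard (n + 1)) ((S.powersetCard n).image (insert x)) := by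
    refine disjoint_left.2 fun T hT hT' => ?_
    obtain ⟨U, -, rfl⟩ := mem_image.1 hT'
    exact hx ((mem_powersetCard.1 hT).1 (mem_insert_self x U))
  have hinj : Set.InjOn (insert x) (S.powersetCard n : Set (Finset V)) := fun U hU W hW h => by
    rw [← erase_insert fun h => hx ((mem_powersetCard.1 hU).1 h),
      ← erase_insert fun h => hx ((mem_powersetCard.1 hW).1 h), h]
  rw [powersetCard_succ_insert hx, sum_union hdisj, ← hS, powersetCard_self, sum_singleton,
    sum_image hinj]

/-- In the random `k`-graph `A_n^{(k)}` given by a uniformly random `(ℤ/kℤ)`-coloring of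
the `(k−1)`-sets, for each fixed vertex `x` the link `L(x)` is distributed exactly as the
binomial random `(k−1)`-graph `G^{(k−1)}(n−1, (k−1)/k)`: for every family `𝒮` of distinct
`(k−1)`-subsets of `V ∖ {x}`, the probability (stated as an exact count over colorings)
that all members of `𝒮` are edges of the link is `((k−1)/k)^{|𝒮|}`. -/
theorem stmt9 {V : Type*} [Fintype V] [DecidableEq V] (k : ℕ) (hk : 2 ≤ k) [NeZero k]
    (x : V) (𝒮 : Finset (Finset V)) (h𝒮 : ∀ S ∈ 𝒮, S.card = k - 1 ∧ x ∉ S) :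
    (((univ : Finset (Finset V → ZMod k)).filter fun f =>
        ∀ S ∈ 𝒮, (∑ T ∈ (insert x S).powersetCard (k - 1), f T) ≠ 0).card : ℝ) =
      ((k - 1) / k) ^ 𝒮.card * (Fintype.card (Finset V → ZMod k) : ℝ) := by
  obtain ⟨n, hn⟩ : ∃ n, k - 1 = n + 1 := ⟨k - 2, by omega⟩
  have hsplit : ∀ S ∈ 𝒮, ∀ f : Finset V → ZMod k, ∑ T ∈ (insert x S).powersetCard (k - 1), f T
      = f S + ∑ T ∈ S.powersetCard n, f (insert x T) := fun S hS f => by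
    rw [hn, sum_powersetCard_insert_of_card_eq (h𝒮 S hS).2 ((h𝒮 S hS).1.trans hn)]
  have hlink : #{f : Finset V → ZMod k |
      ∀ S ∈ 𝒮, ∑ T ∈ (insert x S).powersetCard (k - 1), f T ≠ 0} =
      #{f : Finset V → ZMod k | ∀ S ∈ 𝒮, f S ≠ 0} := by
    rw [← card_filter_forall_add_eq_of_dependsOn 𝒮 (fun a : ZMod k => a ≠ 0)
      (fun S f => ∑ T ∈ S.powersetCard n, f (insert x T))
      fun S _ f g hfg => sum_congr rfl fun T _ => hfg _ fun h => (h𝒮 _ h).2 (mem_insert_self x T)]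
    exact congrArg card (filter_congr fun f _ => forall₂_congr fun S hS => by rw [hsplit S hS f])
  have hle : #𝒮 ≤ Fintype.card (Finset V) := card_le_univ 𝒮
  rw [hlink, card_filter_forall_mem 𝒮 fun a : ZMod k => a ≠ 0, filter_ne',
    card_erase_of_mem (mem_univ _), card_univ, ZMod.card, Fintype.card_fun, ZMod.card]
  push_cast [Nat.cast_sub (by omega : 1 ≤ k)]
  rw [div_pow, pow_sub₀ _ (by positivity) hle]
  field_simp
end
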